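/- arXiv:2410.05754 — 2 statements merged into one kernel-verified Lean document; each statement's English description precedes it below -/
import Mathlib

section
/- Let Σ be a d×d Hermitian matrix and Z an n×d complex matrix. Suppose Z Z* has at least r eigenvalues ≥ a₁ > 0, and Σ has at least s eigenvalues ≥ a₂ > 0. Then Z Σ Z* has at least r + s − d eigenvalues that are ≥ a₁·a₂. -/
/-! Let `U` be the span of the eigenvectors of `Z Z*` with eigenvalue `≥ a₁` and `V` that of the
eigenvectors of `Σ` with eigenvalue `≥ a₂`. For `x ∈ U ∩ (Z*)⁻¹ V`,
`⟪x, Z Σ Z* x⟫ = ⟪Z* x, Σ Z* x⟫ ≥ a₂ ‖Z* x‖² = a₂ ⟪x, Z Z* x⟫ ≥ a₁ a₂ ‖x‖²`, and this subspace has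
dimension at least `r + s - d`. A subspace on which the quadratic form of a Hermitian matrix is
`≥ c ‖x‖²` meets the span of the eigenvectors with eigenvalue `< c` only in `0`, so its dimension
is at most the number of eigenvalues `≥ c`. -/

open Matrix Finset

namespace OrthonormalBasis

variable {𝕜 E ι : Type*} [RCLike 𝕜] [NormedAddCommGroup E] [InnerProductSpace 𝕜 E] [Fintype ι]
  (b : OrthonormalBasis ι 𝕜 E)

theorem repr_eq_zero_of_mem_span_image {P : Set ι} {x : E} (hx : x ∈ Submodule.span 𝕜 (b '' P))
    {i : ι} (hi : i ∉ P) : b.repr x i = 0 := by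
  rw [← b.coe_toBasis, b.toBasis.mem_span_image] at hx
  rw [← b.coe_toBasis_repr_apply]
  by_contra h
  exact hi (hx (Finsupp.mem_support_iff.2 h))

theorem finrank_span_image (P : Finset ι) :
    Module.finrank 𝕜 (Submodule.span 𝕜 (b '' P)) = #P := by
  have := finrank_span_eq_card (b.orthonormal.linearIndependent.comp _ Subtype.val_injective
    (ι' := P))
  rwa [Set.range_comp, Subtype.range_coe_subtype, Finset.setOfPred_mem, Fintype.card_coe] at this

variable {T : E →ₗ[𝕜] E} {μ : ι → ℝ}

theorem repr_map_of_eigen (hb : ∀ i, T (b i) = (μ i : 𝕜) • b i) (x : E) (i : ι) :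
    b.repr (T x) i = μ i * b.repr x i := by
  classical
  conv_lhs => rw [← b.sum_repr x]
  simp [hb, smul_smul, b.repr_self, mul_comm, Pi.single_apply]

theorem re_inner_map_eq_sum (hb : ∀ i, T (b i) = (μ i : 𝕜) • b i) (x : E) :
    RCLike.re (inner 𝕜 x (T x)) = ∑ i, μ i * ‖b.repr x i‖ ^ 2 := by
  rw [← b.repr.inner_map_map, PiLp.inner_apply, map_sum]
  refine Finset.sum_congr rfl fun i _ => ?_
  rw [b.repr_map_of_eigen hb, RCLike.inner_apply, mul_assoc, RCLike.mul_conj, ← RCLike.ofReal_pow,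
    ← RCLike.ofReal_mul, RCLike.ofReal_re]

theorem norm_sq_eq_sum_repr (x : E) : ‖x‖ ^ 2 = ∑ i, ‖b.repr x i‖ ^ 2 := by
  rw [← b.repr.norm_map, EuclideanSpace.norm_sq_eq]

theorem le_re_inner_of_mem_span_image (hb : ∀ i, T (b i) = (μ i : 𝕜) • b i) {P : Set ι} {c : ℝ}
    (hP : ∀ i ∈ P, c ≤ μ i) {x : E} (hx : x ∈ Submodule.span 𝕜 (b '' P)) :
    c * ‖x‖ ^ 2 ≤ RCLike.re (inner 𝕜 x (T x)) := by
  rw [b.re_inner_map_eq_sum hb, b.norm_sq_eq_sum_repr, mul_sum]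
  refine sum_le_sum fun i _ => ?_
  by_cases hi : i ∈ P
  · exact mul_le_mul_of_nonneg_right (hP i hi) (sq_nonneg _)
  · simp [b.repr_eq_zero_of_mem_span_image hx hi]

theorem re_inner_lt_of_mem_span_image (hb : ∀ i, T (b i) = (μ i : 𝕜) • b i) {P : Set ι} {c : ℝ}
    (hP : ∀ i ∈ P, μ i < c) {x : E} (hx : x ∈ Submodule.span 𝕜 (b '' P)) (hx₀ : x ≠ 0) :
    RCLike.re (inner 𝕜 x (T x)) < c * ‖x‖ ^ 2 := by
  rw [b.re_inner_map_eq_sum hb, b.norm_sq_eq_sum_repr, mul_sum]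
  obtain ⟨j, hj⟩ : ∃ j, b.repr x j ≠ 0 := by
    by_contra! h
    exact hx₀ (b.repr.injective (by ext i; simp [h]))
  have hjP : j ∈ P := by_contra fun hjP => hj (b.repr_eq_zero_of_mem_span_image hx hjP)
  refine sum_lt_sum (fun i _ => ?_) ⟨j, mem_univ j, ?_⟩
  · by_cases hi : i ∈ P
    · exact mul_le_mul_of_nonneg_right (hP i hi).le (sq_nonneg _)
    · simp [b.repr_eq_zero_of_mem_span_image hx hi]
  · exact mul_lt_mul_of_pos_right (hP j hjP) (by positivity)

theorem finrank_le_card_of_le_re_inner [FiniteDimensional 𝕜 E]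
    (hb : ∀ i, T (b i) = (μ i : 𝕜) • b i) {c : ℝ} (W : Submodule 𝕜 E)
    (hW : ∀ x ∈ W, c * ‖x‖ ^ 2 ≤ RCLike.re (inner 𝕜 x (T x))) :
    Module.finrank 𝕜 W ≤ #{i | c ≤ μ i} := by
  set N := Submodule.span 𝕜 (b '' ↑({i | μ i < c} : Finset ι))
  have hWN : Disjoint W N := by
    refine Submodule.disjoint_def.2 fun x hxW hxN => by_contra fun hx₀ => ?_
    have := b.re_inner_lt_of_mem_span_image hb (fun i hi => (mem_filter.1 hi).2) hxN hx₀
    linarith [hW x hxW]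
  have hdim := Submodule.finrank_add_finrank_le_of_disjoint hWN
  rw [b.finrank_span_image, Module.finrank_eq_card_basis b.toBasis] at hdim
  have hsplit := card_filter_add_card_filter_not (s := univ) fun i => c ≤ μ i
  simp only [not_le, card_univ] at hsplit
  omega

end OrthonormalBasis

theorem Submodule.finrank_add_finrank_le_finrank_inf_comap_add {K V W : Type*} [DivisionRing K]
    [AddCommGroup V] [Module K V] [FiniteDimensional K V]
    [AddCommGroup W] [Module K W] [FiniteDimensional K W]
    (U : Submodule K V) (Y : Submodule K W) (f : V →ₗ[K] W) :
    Module.finrank K U + Module.finrank K Y ≤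
      Module.finrank K ↥(U ⊓ Y.comap f) + Module.finrank K W := by
  have hker : LinearMap.ker (Y.mkQ ∘ₗ f) = Y.comap f := by
    rw [LinearMap.ker_comp, Submodule.ker_mkQ]
  have hrank := (Y.mkQ ∘ₗ f).finrank_range_add_finrank_ker
  rw [hker] at hrank
  have hrange := (LinearMap.range (Y.mkQ ∘ₗ f)).finrank_le
  have hquot := Y.finrank_quotient_add_finrank
  have hsup := U.finrank_sup_add_finrank_inf_eq (Y.comap f)
  have hsup_le := (U ⊔ Y.comap f).finrank_le
  omega

namespace Matrix

variable {𝕜 m n : Type*} [RCLike 𝕜] [Fintype m] [Fintype n] [DecidableEq m] [DecidableEq n]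

theorem IsHermitian.toEuclideanLin_eigenvectorBasis {A : Matrix n n 𝕜} (hA : A.IsHermitian)
    (i : n) : toEuclideanLin A (hA.eigenvectorBasis i) =
      (hA.eigenvalues i : 𝕜) • hA.eigenvectorBasis i := by
  ext1
  rw [ofLp_toLpLin, toLin'_apply, hA.mulVec_eigenvectorBasis, RCLike.real_smul_eq_coe_smul (K := 𝕜)]
  rfl

theorem inner_toEuclideanLin_mul_mul_conjTranspose (Z : Matrix m n 𝕜) (S : Matrix n n 𝕜)
    (x : EuclideanSpace 𝕜 m) :
    inner 𝕜 x (toEuclideanLin (Z * S * Zᴴ) x) =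
      inner 𝕜 (toEuclideanLin Zᴴ x) (toEuclideanLin S (toEuclideanLin Zᴴ x)) := by
  have hfactor : toEuclideanLin (Z * S * Zᴴ) x =
      toEuclideanLin Z (toEuclideanLin S (toEuclideanLin Zᴴ x)) := by
    simp [Matrix.mul_assoc]
  rw [hfactor, toEuclideanLin_conjTranspose_eq_adjoint, LinearMap.adjoint_inner_left]

theorem inner_toEuclideanLin_mul_conjTranspose_self (Z : Matrix m n 𝕜)
    (x : EuclideanSpace 𝕜 m) :
    inner 𝕜 x (toEuclideanLin (Z * Zᴴ) x) =
      inner 𝕜 (toEuclideanLin Zᴴ x) (toEuclideanLin Zᴴ x) := by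
  simpa using inner_toEuclideanLin_mul_mul_conjTranspose Z 1 x

end Matrix

theorem eigs_ge_of_sandwich_general {n d : ℕ} {S : Matrix (Fin d) (Fin d) ℂ} (hS : S.IsHermitian)
    (Z : Matrix (Fin n) (Fin d) ℂ) {r s : ℕ} {a₁ a₂ : ℝ} (ha₂ : 0 < a₂)
    (hr : r ≤ (Finset.univ.filter fun i =>
      a₁ ≤ (Matrix.isHermitian_mul_conjTranspose_self Z).eigenvalues i).card)
    (hs : s ≤ (Finset.univ.filter fun i => a₂ ≤ hS.eigenvalues i).card) :
    r + s - d ≤ (Finset.univ.filter fun i =>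
      a₁ * a₂ ≤ (Matrix.isHermitian_mul_mul_conjTranspose Z hS).eigenvalues i).card := by
  set hZZ := isHermitian_mul_conjTranspose_self Z
  set hZSZ := isHermitian_mul_mul_conjTranspose Z hS
  set g := toEuclideanLin Zᴴ
  set U := Submodule.span ℂ (hZZ.eigenvectorBasis '' ↑({i | a₁ ≤ hZZ.eigenvalues i} : Finset _))
  set V := Submodule.span ℂ (hS.eigenvectorBasis '' ↑({i | a₂ ≤ hS.eigenvalues i} : Finset _))
  have hU : ∀ x ∈ U, a₁ * ‖x‖ ^ 2 ≤ ‖g x‖ ^ 2 := fun x hx => by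
    have := hZZ.eigenvectorBasis.le_re_inner_of_mem_span_image
      hZZ.toEuclideanLin_eigenvectorBasis (fun i hi => (mem_filter.1 hi).2) hx
    rwa [inner_toEuclideanLin_mul_conjTranspose_self, inner_self_eq_norm_sq] at this
  have hV : ∀ y ∈ V, a₂ * ‖y‖ ^ 2 ≤ RCLike.re (inner ℂ y (toEuclideanLin S y)) :=
    fun y => hS.eigenvectorBasis.le_re_inner_of_mem_span_image
      hS.toEuclideanLin_eigenvectorBasis fun i hi => (mem_filter.1 hi).2
  have hUV : ∀ x ∈ U ⊓ V.comap g,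
      a₁ * a₂ * ‖x‖ ^ 2 ≤ RCLike.re (inner ℂ x (toEuclideanLin (Z * S * Zᴴ) x)) := by
    rintro x ⟨hxU, hxV⟩
    rw [inner_toEuclideanLin_mul_mul_conjTranspose]
    calc a₁ * a₂ * ‖x‖ ^ 2 = a₂ * (a₁ * ‖x‖ ^ 2) := by ring
      _ ≤ a₂ * ‖g x‖ ^ 2 := by gcongr; exact hU x hxU
      _ ≤ _ := hV _ hxV
  have hcount := hZSZ.eigenvectorBasis.finrank_le_card_of_le_re_inner
    hZSZ.toEuclideanLin_eigenvectorBasis _ hUV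
  have hdim := U.finrank_add_finrank_le_finrank_inf_comap_add V g
  rw [OrthonormalBasis.finrank_span_image, OrthonormalBasis.finrank_span_image,
    finrank_euclideanSpace_fin] at hdim
  omega

/-- If `Z Z*` has at least `r` eigenvalues `≥ a₁ > 0` and the Hermitian matrix `Σ` has at
least `s` eigenvalues `≥ a₂ > 0`, then `Z Σ Z*` has at least `r + s − d` eigenvalues
`≥ a₁ a₂` (all eigenvalues counted with multiplicity). -/
theorem eigs_ge_of_sandwich {n d : ℕ} {S : Matrix (Fin d) (Fin d) ℂ} (hS : S.IsHermitian)
    (Z : Matrix (Fin n) (Fin d) ℂ) {r s : ℕ} {a₁ a₂ : ℝ} (ha₁ : 0 < a₁) (ha₂ : 0 < a₂)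
    (hr : r ≤ (Finset.univ.filter fun i =>
      a₁ ≤ (Matrix.isHermitian_mul_conjTranspose_self Z).eigenvalues i).card)
    (hs : s ≤ (Finset.univ.filter fun i => a₂ ≤ hS.eigenvalues i).card) :
    r + s - d ≤ (Finset.univ.filter fun i =>
      a₁ * a₂ ≤ (Matrix.isHermitian_mul_mul_conjTranspose Z hS).eigenvalues i).card :=
  eigs_ge_of_sandwich_general hS Z ha₂ hr hs
end

section
/- Let Z ∈ ℂ^{n×d} and let Σ ∈ ℂ^{d×d} be positive semidefinite. Then for every 1 ≤ i ≤ min(n,d), λ_{i+d−min(n,d)}(Σ) · λ_{min(n,d)}(Z*Z) ≤ λ_i(Σ^{1/2} Z* Z Σ^{1/2}) ≤ λ_i(Σ) · λ_1(Z*Z), where λ_j denotes the j-th largest eigenvalue. -/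
/-!
Both bounds are Courant–Fischer arguments for `M = R (Z*Z) R` with `R = Σ^{1/2}`: the quadratic
form of `M` is `⟪Rx, Z*Z Rx⟫`, and `‖Rx‖² = ⟪x, Σx⟫`. On the span of the eigenvectors of `Σ` for
`λ_i(Σ), …, λ_d(Σ)`, a subspace of codimension `i - 1`, this form is at most
`λ_1(Z*Z) λ_i(Σ) ‖x‖²`. With `r = min(n,d)`, the span of the top `i + d - r` eigenvectors of `Σ`
meets the `R`-preimage of the span of the top `r` eigenvectors of `Z*Z` in dimension at least `i`,
and there the form is at least `λ_r(Z*Z) λ_{i+d-r}(Σ) ‖x‖²`.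
-/

open Matrix
open scoped ComplexOrder

/-- The `i`-th largest eigenvalue (1-based index `i.val + 1`, i.e. index `0` is the largest)
of a Hermitian matrix. -/
noncomputable def eigDesc {K : Type*} [RCLike K] {m : ℕ} {A : Matrix (Fin m) (Fin m) K}
    (hA : A.IsHermitian) (i : Fin m) : ℝ :=
  hA.eigenvalues (Tuple.sort hA.eigenvalues i.rev)

/-- The square root of a positive semidefinite matrix, as defined in Mathlib (Dec 2024). -/
noncomputable def Matrix.PosSemidef.sqrt {n : Type*} [Fintype n] [DecidableEq n] {𝕜 : Type*}
    [RCLike 𝕜] {A : Matrix n n 𝕜} (hA : A.PosSemidef) : Matrix n n 𝕜 :=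
  hA.1.eigenvectorUnitary.1 * diagonal ((↑) ∘ (√·) ∘ hA.1.eigenvalues) *
    (star hA.1.eigenvectorUnitary : Matrix n n 𝕜)

lemma Matrix.PosSemidef.sqrt_isHermitian_old {n : Type*} [Fintype n] [DecidableEq n] {𝕜 : Type*}
    [RCLike 𝕜] {A : Matrix n n 𝕜} (hA : A.PosSemidef) : hA.sqrt.IsHermitian := by
  have h := Matrix.isHermitian_mul_mul_conjTranspose hA.1.eigenvectorUnitary.1
    (isHermitian_diagonal_of_self_adjoint
      (((↑) : ℝ → 𝕜) ∘ (√·) ∘ hA.1.eigenvalues) (by ext i; simp))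
  exact h

lemma sqrt_gram_sqrt_isHermitian {n d : ℕ} (Z : Matrix (Fin n) (Fin d) ℂ)
    {S : Matrix (Fin d) (Fin d) ℂ} (hS : S.PosSemidef) :
    (hS.sqrt * (Zᴴ * Z) * hS.sqrt).IsHermitian := by
  have h2 := Matrix.isHermitian_mul_mul_conjTranspose hS.sqrt
    (Matrix.isHermitian_conjTranspose_mul_self Z)
  rwa [hS.sqrt_isHermitian_old.eq] at h2

open Module

namespace Submodule

variable {K V W : Type*} [DivisionRing K] [AddCommGroup V] [Module K V] [FiniteDimensional K V]
  [AddCommGroup W] [Module K W] [FiniteDimensional K W]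

theorem finrank_add_finrank_le_finrank_inf_add (s t : Submodule K V) :
    finrank K s + finrank K t ≤ finrank K ↥(s ⊓ t) + finrank K V := by
  rw [← finrank_sup_add_finrank_inf_eq, add_comm (finrank K ↥(s ⊔ t))]
  exact Nat.add_le_add_left (finrank_le _) _

theorem exists_ne_zero_mem_inf_of_finrank_lt {s t : Submodule K V}
    (h : finrank K V < finrank K s + finrank K t) : ∃ x ∈ s, x ∈ t ∧ x ≠ 0 := by
  by_contra! hst
  exact h.not_ge (finrank_add_finrank_le_of_disjoint (disjoint_def.2 hst))

theorem finrank_add_finrank_le_finrank_comap_add (f : V →ₗ[K] W) (p : Submodule K W) :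
    finrank K V + finrank K p ≤ finrank K (p.comap f) + finrank K W := by
  have hker : p.comap f = LinearMap.ker (p.mkQ ∘ₗ f) := by
    rw [LinearMap.ker_comp, ker_mkQ]
  have hrange := finrank_le (LinearMap.range (p.mkQ ∘ₗ f))
  have := LinearMap.finrank_range_add_finrank_ker (p.mkQ ∘ₗ f)
  have := p.finrank_quotient_add_finrank
  rw [hker]
  omega

end Submodule

namespace Matrix.IsHermitian

variable {𝕜 : Type*} [RCLike 𝕜] {m : ℕ} {A : Matrix (Fin m) (Fin m) 𝕜} (hA : A.IsHermitian)

theorem eigDesc_antitone : Antitone (eigDesc hA) :=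
  (Tuple.monotone_sort hA.eigenvalues).comp_antitone Fin.rev_anti

noncomputable def eigDescBasis : OrthonormalBasis (Fin m) 𝕜 (EuclideanSpace 𝕜 (Fin m)) :=
  hA.eigenvectorBasis.reindex (Fin.revPerm.trans (Tuple.sort hA.eigenvalues)).symm

theorem toEuclideanLin_eigDescBasis (j : Fin m) :
    toEuclideanLin A (hA.eigDescBasis j) = (eigDesc hA j : 𝕜) • hA.eigDescBasis j := by
  have h := hA.mulVec_eigenvectorBasis (Tuple.sort hA.eigenvalues j.rev)
  simp only [eigDescBasis, OrthonormalBasis.reindex_apply, Equiv.symm_symm, Equiv.trans_apply,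
    Fin.revPerm_apply]
  apply WithLp.ofLp_injective
  rw [ofLp_toLpLin, toLin'_apply, h, WithLp.ofLp_smul, RCLike.real_smul_eq_coe_smul (K := 𝕜)]
  rfl

theorem repr_toEuclideanLin (x : EuclideanSpace 𝕜 (Fin m)) (j : Fin m) :
    hA.eigDescBasis.repr (toEuclideanLin A x) j = eigDesc hA j * hA.eigDescBasis.repr x j := by
  rw [OrthonormalBasis.repr_apply_apply, OrthonormalBasis.repr_apply_apply,
    ← isSymmetric_toEuclideanLin_iff.2 hA, toEuclideanLin_eigDescBasis, inner_smul_left,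
    RCLike.conj_ofReal]

theorem re_inner_toEuclideanLin_eq_sum (x : EuclideanSpace 𝕜 (Fin m)) :
    RCLike.re (inner 𝕜 x (toEuclideanLin A x)) =
      ∑ j, eigDesc hA j * ‖hA.eigDescBasis.repr x j‖ ^ 2 := by
  rw [← hA.eigDescBasis.repr.inner_map_map, PiLp.inner_apply, map_sum]
  refine Finset.sum_congr rfl fun j _ => ?_
  rw [repr_toEuclideanLin, RCLike.inner_apply, mul_assoc, RCLike.mul_conj,
    ← RCLike.ofReal_pow, ← RCLike.ofReal_mul, RCLike.ofReal_re]

theorem re_inner_le_of_repr_ne_zero {x : EuclideanSpace 𝕜 (Fin m)} {t : ℝ}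
    (h : ∀ j, hA.eigDescBasis.repr x j ≠ 0 → eigDesc hA j ≤ t) :
    RCLike.re (inner 𝕜 x (toEuclideanLin A x)) ≤ t * ‖x‖ ^ 2 := by
  rw [re_inner_toEuclideanLin_eq_sum, ← hA.eigDescBasis.repr.norm_map x,
    EuclideanSpace.norm_sq_eq, Finset.mul_sum]
  refine Finset.sum_le_sum fun j _ => ?_
  by_cases hj : hA.eigDescBasis.repr x j = 0
  · simp [hj]
  · exact mul_le_mul_of_nonneg_right (h j hj) (sq_nonneg _)

theorem le_re_inner_of_repr_ne_zero {x : EuclideanSpace 𝕜 (Fin m)} {t : ℝ}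
    (h : ∀ j, hA.eigDescBasis.repr x j ≠ 0 → t ≤ eigDesc hA j) :
    t * ‖x‖ ^ 2 ≤ RCLike.re (inner 𝕜 x (toEuclideanLin A x)) := by
  rw [re_inner_toEuclideanLin_eq_sum, ← hA.eigDescBasis.repr.norm_map x,
    EuclideanSpace.norm_sq_eq, Finset.mul_sum]
  refine Finset.sum_le_sum fun j _ => ?_
  by_cases hj : hA.eigDescBasis.repr x j = 0
  · simp [hj]
  · exact mul_le_mul_of_nonneg_right (h j hj) (sq_nonneg _)

theorem re_inner_le_eigDesc_zero_mul (hm : 0 < m) (x : EuclideanSpace 𝕜 (Fin m)) :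
    RCLike.re (inner 𝕜 x (toEuclideanLin A x)) ≤ eigDesc hA ⟨0, hm⟩ * ‖x‖ ^ 2 :=
  hA.re_inner_le_of_repr_ne_zero fun j _ => hA.eigDesc_antitone (Nat.zero_le j)

noncomputable def eigDescSpan (s : Finset (Fin m)) : Submodule 𝕜 (EuclideanSpace 𝕜 (Fin m)) :=
  Submodule.span 𝕜 (hA.eigDescBasis '' s)

theorem finrank_eigDescSpan (s : Finset (Fin m)) : finrank 𝕜 (hA.eigDescSpan s) = s.card := by
  rw [eigDescSpan, Set.image_eq_range, finrank_span_eq_card]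
  · simp
  · exact hA.eigDescBasis.orthonormal.linearIndependent.comp _ Subtype.val_injective

theorem repr_eq_zero_of_mem_eigDescSpan {s : Finset (Fin m)} {x : EuclideanSpace 𝕜 (Fin m)}
    (hx : x ∈ hA.eigDescSpan s) {j : Fin m} (hj : j ∉ s) : hA.eigDescBasis.repr x j = 0 := by
  rw [eigDescSpan, ← hA.eigDescBasis.coe_toBasis, Basis.mem_span_image] at hx
  rw [← hA.eigDescBasis.coe_toBasis_repr_apply]
  exact Finsupp.notMem_support_iff.1 fun hj' => hj (hx hj')

theorem eigDesc_mul_le_re_inner_of_mem_eigDescSpan_Iic {k : Fin m}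
    {x : EuclideanSpace 𝕜 (Fin m)} (hx : x ∈ hA.eigDescSpan (Finset.Iic k)) :
    eigDesc hA k * ‖x‖ ^ 2 ≤ RCLike.re (inner 𝕜 x (toEuclideanLin A x)) :=
  hA.le_re_inner_of_repr_ne_zero fun j hj => hA.eigDesc_antitone <| by
    by_contra hjk
    exact hj (hA.repr_eq_zero_of_mem_eigDescSpan hx (by simpa using hjk))

theorem re_inner_le_eigDesc_mul_of_mem_eigDescSpan_Ici {k : Fin m}
    {x : EuclideanSpace 𝕜 (Fin m)} (hx : x ∈ hA.eigDescSpan (Finset.Ici k)) :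
    RCLike.re (inner 𝕜 x (toEuclideanLin A x)) ≤ eigDesc hA k * ‖x‖ ^ 2 :=
  hA.re_inner_le_of_repr_ne_zero fun j hj => hA.eigDesc_antitone <| by
    by_contra hjk
    exact hj (hA.repr_eq_zero_of_mem_eigDescSpan hx (by simpa using hjk))

theorem le_eigDesc_of_forall_mem {k : Fin m} {V : Submodule 𝕜 (EuclideanSpace 𝕜 (Fin m))}
    (hV : k + 1 ≤ finrank 𝕜 V) {t : ℝ}
    (h : ∀ x ∈ V, t * ‖x‖ ^ 2 ≤ RCLike.re (inner 𝕜 x (toEuclideanLin A x))) :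
    t ≤ eigDesc hA k := by
  obtain ⟨x, hxV, hxk, hx0⟩ := Submodule.exists_ne_zero_mem_inf_of_finrank_lt (s := V)
    (t := hA.eigDescSpan (Finset.Ici k)) (by
    rw [finrank_eigDescSpan, Fin.card_Ici, finrank_euclideanSpace_fin]; omega)
  exact le_of_mul_le_mul_right
    ((h x hxV).trans (hA.re_inner_le_eigDesc_mul_of_mem_eigDescSpan_Ici hxk)) (by positivity)

theorem eigDesc_le_of_forall_mem {k : Fin m} {W : Submodule 𝕜 (EuclideanSpace 𝕜 (Fin m))}
    (hW : m - k ≤ finrank 𝕜 W) {t : ℝ}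
    (h : ∀ x ∈ W, RCLike.re (inner 𝕜 x (toEuclideanLin A x)) ≤ t * ‖x‖ ^ 2) :
    eigDesc hA k ≤ t := by
  obtain ⟨x, hxW, hxk, hx0⟩ := Submodule.exists_ne_zero_mem_inf_of_finrank_lt (s := W)
    (t := hA.eigDescSpan (Finset.Iic k)) (by
    rw [finrank_eigDescSpan, Fin.card_Iic, finrank_euclideanSpace_fin]; omega)
  exact le_of_mul_le_mul_right
    ((hA.eigDesc_mul_le_re_inner_of_mem_eigDescSpan_Iic hxk).trans (h x hxW)) (by positivity)

end Matrix.IsHermitian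

theorem Matrix.PosSemidef.eigDesc_nonneg {𝕜 : Type*} [RCLike 𝕜] {m : ℕ}
    {A : Matrix (Fin m) (Fin m) 𝕜} (hA : A.PosSemidef) (k : Fin m) : 0 ≤ eigDesc hA.1 k :=
  hA.eigenvalues_nonneg _

lemma Matrix.PosSemidef.sqrt_mul_self {n : Type*} [Fintype n] [DecidableEq n] {𝕜 : Type*}
    [RCLike 𝕜] {A : Matrix n n 𝕜} (hA : A.PosSemidef) : hA.sqrt * hA.sqrt = A := by
  unfold Matrix.PosSemidef.sqrt
  conv_rhs => rw [hA.1.spectral_theorem, Unitary.conjStarAlgAut_apply]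
  have hU : (star hA.1.eigenvectorUnitary : Matrix n n 𝕜) * hA.1.eigenvectorUnitary.1 = 1 := by
    simp
  rw [show ∀ a b c d e f : Matrix n n 𝕜, a * b * c * (d * e * f) = a * (b * (c * d) * e) * f from
    fun _ _ _ _ _ _ => by simp only [mul_assoc], hU, mul_one, diagonal_mul_diagonal]
  congr 3
  funext i
  simp [← RCLike.ofReal_mul, Real.mul_self_sqrt (hA.eigenvalues_nonneg i)]

namespace Matrix

variable {𝕜 : Type*} [RCLike 𝕜] {m : ℕ} {R B S : Matrix (Fin m) (Fin m) 𝕜}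

theorem inner_toEuclideanLin_mul_mul (hR : R.IsHermitian) (x : EuclideanSpace 𝕜 (Fin m)) :
    inner 𝕜 x (toEuclideanLin (R * B * R) x) =
      inner 𝕜 (toEuclideanLin R x) (toEuclideanLin B (toEuclideanLin R x)) := by
  rw [toLpLin_mul_same, toLpLin_mul_same, LinearMap.comp_apply, LinearMap.comp_apply,
    ← isSymmetric_toEuclideanLin_iff.2 hR]

theorem re_inner_toEuclideanLin_eq_norm_sq (hR : R.IsHermitian) (hRS : R * R = S)
    (x : EuclideanSpace 𝕜 (Fin m)) :
    RCLike.re (inner 𝕜 x (toEuclideanLin S x)) = ‖toEuclideanLin R x‖ ^ 2 := by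
  rw [← hRS, toLpLin_mul_same, LinearMap.comp_apply, ← isSymmetric_toEuclideanLin_iff.2 hR,
    inner_self_eq_norm_sq]

theorem eigDesc_mul_mul_le_eigDesc_mul_eigDesc_zero (hR : R.IsHermitian) (hS : S.IsHermitian)
    (hRS : R * R = S) (hB : B.PosSemidef) (hM : (R * B * R).IsHermitian) (hm : 0 < m) (k : Fin m) :
    eigDesc hM k ≤ eigDesc hS k * eigDesc hB.1 ⟨0, hm⟩ := by
  refine hM.eigDesc_le_of_forall_mem (W := hS.eigDescSpan (Finset.Ici k))
    (by rw [hS.finrank_eigDescSpan, Fin.card_Ici]) fun x hx => ?_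
  have hSx := hS.re_inner_le_eigDesc_mul_of_mem_eigDescSpan_Ici hx
  rw [re_inner_toEuclideanLin_eq_norm_sq hR hRS] at hSx
  calc RCLike.re (inner 𝕜 x (toEuclideanLin (R * B * R) x))
      ≤ eigDesc hB.1 ⟨0, hm⟩ * ‖toEuclideanLin R x‖ ^ 2 := by
        rw [inner_toEuclideanLin_mul_mul hR]
        exact hB.1.re_inner_le_eigDesc_zero_mul hm _
    _ ≤ eigDesc hB.1 ⟨0, hm⟩ * (eigDesc hS k * ‖x‖ ^ 2) :=
        mul_le_mul_of_nonneg_left hSx (hB.eigDesc_nonneg _)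
    _ = eigDesc hS k * eigDesc hB.1 ⟨0, hm⟩ * ‖x‖ ^ 2 := by ring

theorem eigDesc_mul_eigDesc_le_eigDesc_mul_mul (hR : R.IsHermitian) (hS : S.IsHermitian)
    (hRS : R * R = S) (hB : B.PosSemidef) (hM : (R * B * R).IsHermitian) {k₁ k₂ k : Fin m}
    (hk : k + m ≤ k₁ + k₂ + 1) :
    eigDesc hS k₁ * eigDesc hB.1 k₂ ≤ eigDesc hM k := by
  have hC := Submodule.finrank_add_finrank_le_finrank_comap_add (toEuclideanLin R)
    (hB.1.eigDescSpan (Finset.Iic k₂))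
  have hUC := Submodule.finrank_add_finrank_le_finrank_inf_add (hS.eigDescSpan (Finset.Iic k₁))
    ((hB.1.eigDescSpan (Finset.Iic k₂)).comap (toEuclideanLin R))
  rw [hB.1.finrank_eigDescSpan, Fin.card_Iic, finrank_euclideanSpace_fin] at hC
  rw [hS.finrank_eigDescSpan, Fin.card_Iic, finrank_euclideanSpace_fin] at hUC
  set U := hS.eigDescSpan (Finset.Iic k₁)
  set C := (hB.1.eigDescSpan (Finset.Iic k₂)).comap (toEuclideanLin R)
  refine hM.le_eigDesc_of_forall_mem (V := U ⊓ C) (by omega) fun x hx => ?_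
  obtain ⟨hxU, hxC⟩ := Submodule.mem_inf.1 hx
  have hSx := hS.eigDesc_mul_le_re_inner_of_mem_eigDescSpan_Iic hxU
  rw [re_inner_toEuclideanLin_eq_norm_sq hR hRS] at hSx
  calc eigDesc hS k₁ * eigDesc hB.1 k₂ * ‖x‖ ^ 2
      = eigDesc hB.1 k₂ * (eigDesc hS k₁ * ‖x‖ ^ 2) := by ring
    _ ≤ eigDesc hB.1 k₂ * ‖toEuclideanLin R x‖ ^ 2 :=
        mul_le_mul_of_nonneg_left hSx (hB.eigDesc_nonneg _)
    _ ≤ RCLike.re (inner 𝕜 x (toEuclideanLin (R * B * R) x)) := by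
        rw [inner_toEuclideanLin_mul_mul hR]
        exact hB.1.eigDesc_mul_le_re_inner_of_mem_eigDescSpan_Iic hxC

end Matrix

/-- Generalized Ostrowski theorem: for `Z ∈ ℂ^{n×d}` and `Σ ⪰ 0`, for every
`1 ≤ i ≤ min(n,d)`,
`λ_{i+d−min(n,d)}(Σ) λ_{min(n,d)}(Z*Z) ≤ λ_i(Σ^{1/2} Z* Z Σ^{1/2}) ≤ λ_i(Σ) λ_1(Z*Z)`,
where `λ_j` denotes the `j`-th largest eigenvalue. -/
theorem ostrowski_nonsquare {n d : ℕ} (Z : Matrix (Fin n) (Fin d) ℂ)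
    {S : Matrix (Fin d) (Fin d) ℂ} (hS : S.PosSemidef)
    (i : ℕ) (hi1 : 1 ≤ i) (hi2 : i ≤ min n d) :
    eigDesc hS.1 ⟨i + d - min n d - 1, by omega⟩ *
        eigDesc (Matrix.isHermitian_conjTranspose_mul_self Z) ⟨min n d - 1, by omega⟩ ≤
      eigDesc (sqrt_gram_sqrt_isHermitian Z hS) ⟨i - 1, by omega⟩ ∧
    eigDesc (sqrt_gram_sqrt_isHermitian Z hS) ⟨i - 1, by omega⟩ ≤
      eigDesc hS.1 ⟨i - 1, by omega⟩ *
        eigDesc (Matrix.isHermitian_conjTranspose_mul_self Z) ⟨0, by omega⟩ := by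
  have hZ := posSemidef_conjTranspose_mul_self Z
  have hR := hS.sqrt_isHermitian_old
  have hM := sqrt_gram_sqrt_isHermitian Z hS
  exact ⟨eigDesc_mul_eigDesc_le_eigDesc_mul_mul hR hS.1 hS.sqrt_mul_self hZ hM
      (by dsimp only; omega),
    eigDesc_mul_mul_le_eigDesc_mul_eigDesc_zero hR hS.1 hS.sqrt_mul_self hZ hM (by omega) _⟩
end
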